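/- Let P = (X,≺) be a finite poset with n elements and z₁ ≺ z₂ ≺ z₃ distinct. Suppose F(k,ℓ+2) = F(k+2,ℓ) = 0 and F(k,ℓ)·F(k+1,ℓ+1) > 0 for some k,ℓ ≥ 1. Then every element of X is comparable to z₂. -/

import Mathlib

/-!
Suppose `u` is incomparable to `z₂`. A linear extension can be changed locally: if `z` is not at its
lowest possible position `#{x | x < z}`, sliding the last element below it that is not `≤ z` up to
its place moves `z` one step down and leaves everything above `z` in place; dually upwards.

In an extension with gaps `(k + 1, ℓ)`, `z₁` must be at its lowest position (otherwise lowering it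
gives gaps `(k + 2, ℓ)`), so `F(k + 1, ℓ + 1) > 0` forces `z₃` to be below its highest position.
Moving `z₂` one step towards `u` keeps `z₁` fixed and moves `z₃` by at most one; raising `z₃`
afterwards yields gaps `(k, ℓ + 2)` or `(k + 2, ℓ)`, which is impossible. An extension with gaps
`(k + 1, ℓ)` comes from one with gaps `(k, ℓ)` by lowering `z₁`, unless `z₁` is already lowest;
then `z₃` is not highest and the dual argument applies to `Xᵒᵈ`.
-/

/-- The number of linear extensions `L` of a finite poset `X`
(order-preserving bijections `X ≃ Fin (card X)`) such that
`L z₂ − L z₁ = k` and `L z₃ − L z₂ = l`. -/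
noncomputable def F (X : Type) [PartialOrder X] [Fintype X] (z₁ z₂ z₃ : X) (k l : ℕ) : ℕ :=
  Nat.card {L : X ≃ Fin (Fintype.card X) // (∀ a b : X, a < b → L a < L b) ∧
    (L z₂ : ℕ) = (L z₁ : ℕ) + k ∧ (L z₃ : ℕ) = (L z₂ : ℕ) + l}

open Finset OrderDual
open scoped Classical

namespace LinExt

section Positions

variable {X : Type*} {n : ℕ}

theorem card_filter_apply_lt [Fintype X] (L : X ≃ Fin n) (i : Fin n) : #{x | L x < i} = i := by
  rw [← Fin.card_Iio i, ← card_map L.toEmbedding]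
  congr 1
  ext j
  simp only [mem_map, mem_filter, mem_univ, true_and, Equiv.coe_toEmbedding, mem_Iio]
  exact ⟨by rintro ⟨x, hx, rfl⟩; exact hx, fun hj => ⟨L.symm j, by simpa using hj, by simp⟩⟩

variable [PartialOrder X]

theorem card_filter_lt_le_apply [Fintype X] {L : X ≃ Fin n} (hL : StrictMono L) (z : X) :
    #{x | x < z} ≤ L z :=
  calc #{x | x < z} ≤ #{x | L x < L z} := card_le_card (monotone_filter_right _ fun _ _ hx => hL hx)
    _ = L z := card_filter_apply_lt L (L z)

theorem exists_apply_lt_not_le [Fintype X] (L : X ≃ Fin n) {z : X} (h : #{x | x < z} < L z) :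
    ∃ x, L x < L z ∧ ¬ x ≤ z := by
  by_contra! hno
  refine h.not_ge ?_
  calc (L z : ℕ) = #{x | L x < L z} := (card_filter_apply_lt L (L z)).symm
    _ ≤ #{x | x < z} := card_le_card (monotone_filter_right _ fun x _ hx =>
        (hno x hx).lt_of_ne (by rintro rfl; exact lt_irrefl _ hx))

end Positions

section Duality

variable {X : Type*} {n : ℕ}

def revDual : (X ≃ Fin n) ≃ (Xᵒᵈ ≃ Fin n) := toDual.equivCongr Fin.revPerm

theorem revDual_apply (L : X ≃ Fin n) (x : X) : revDual L (toDual x) = (L x).rev := rfl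

theorem val_revDual_add (L : X ≃ Fin n) (x : X) : (revDual L (toDual x) : ℕ) + L x + 1 = n := by
  rw [revDual_apply, Fin.val_rev]
  have := (L x).isLt
  omega

variable [PartialOrder X]

theorem strictMono_revDual_iff {L : X ≃ Fin n} : StrictMono (revDual L) ↔ StrictMono L :=
  ⟨fun h _ _ hab => Fin.rev_lt_rev.1 (h (toDual_lt_toDual.2 hab)),
    fun h _ _ hab => Fin.rev_lt_rev.2 (h hab)⟩

variable [Fintype X]

theorem card_filter_lt_toDual (z : X) : #{x : Xᵒᵈ | x < toDual z} = #{x | z < x} := rfl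

theorem apply_add_card_filter_gt_lt {L : X ≃ Fin n} (hL : StrictMono L) (z : X) :
    (L z : ℕ) + #{x | z < x} < n := by
  have := card_filter_lt_le_apply (strictMono_revDual_iff.2 hL) (toDual z)
  rw [card_filter_lt_toDual] at this
  have := val_revDual_add L z
  omega

theorem exists_apply_gt_not_ge (L : X ≃ Fin n) {z : X} (h : (L z : ℕ) + #{x | z < x} + 1 < n) :
    ∃ x, L z < L x ∧ ¬ z ≤ x := by
  have := val_revDual_add L z
  obtain ⟨x, hx, hxz⟩ := exists_apply_lt_not_le (revDual L) (z := toDual z)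
    (by rw [card_filter_lt_toDual]; omega)
  exact ⟨ofDual x, Fin.rev_lt_rev.1 hx, hxz⟩

end Duality

section Moves

variable {X : Type*} [PartialOrder X] {n : ℕ}

theorem val_cycleIcc [NeZero n] (i j k : Fin n) :
    (Fin.cycleIcc i j k : ℕ) =
      if (k : ℕ) < i ∨ (j : ℕ) < k then (k : ℕ) else if (k : ℕ) = j then (i : ℕ) else k + 1 := by
  rcases lt_or_ge k i with hki | hik
  · simp [Fin.cycleIcc_of_lt hki, hki]
  rcases lt_or_ge j k with hjk | hkj
  · simp [Fin.cycleIcc_of_gt hjk, hjk]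
  rw [Fin.cycleIcc_of_le_of_le hik hkj, if_neg (show ¬ ((k : ℕ) < i ∨ (j : ℕ) < k) by omega)]
  by_cases h : k = j
  · simp [h]
  · rw [if_neg h, if_neg (Fin.val_injective.ne h), Fin.val_add_one_of_lt' (by omega)]

/-- `Fin.cycleIcc i (L w)` moves `w` down to position `i` and shifts everything in between up by one
place. -/
theorem strictMono_trans_cycleIcc [NeZero n] {L : X ≃ Fin n} (hL : StrictMono L) {w : X}
    {i : Fin n} (hw : ∀ y, i ≤ L y → L y < L w → ¬ y < w) :
    StrictMono (L.trans (Fin.cycleIcc i (L w))) := by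
  intro a b hab
  have hlt := hL hab
  have hjump : L b = L w → ¬ (i ≤ L a ∧ L a < L w) := fun h ⟨h₁, h₂⟩ =>
    hw a h₁ h₂ (L.injective h ▸ hab)
  rw [Fin.lt_def, Equiv.trans_apply, Equiv.trans_apply, val_cycleIcc, val_cycleIcc]
  simp only [Fin.ext_iff] at hjump
  split_ifs <;> omega

theorem exists_raise [Fintype X] {L : X ≃ Fin n} (hL : StrictMono L) {z x : X} (hx : L z < L x)
    (hzx : ¬ z ≤ x) :
    ∃ L' : X ≃ Fin n, StrictMono L' ∧ (L' z : ℕ) = L z + 1 ∧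
      (∀ y, L y < L z → (L' y : ℕ) = L y) ∧
      ∀ y, z ≤ y → (L' y : ℕ) = L y ∨ (L' y : ℕ) = L y + 1 := by
  obtain ⟨w, hw, hmin⟩ := exists_min_image {y | L z < L y ∧ ¬ z ≤ y} L ⟨x, by simp [hx, hzx]⟩
  simp only [mem_filter, mem_univ, true_and, and_imp] at hw hmin
  obtain ⟨hzw, hzw'⟩ := hw
  have hblock : ∀ y, L z ≤ L y → L y < L w → ¬ y < w := by
    intro y h₁ h₂ hyw
    rcases h₁.eq_or_lt with h | h
    · exact hzw' (L.injective h ▸ hyw.le)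
    · exact (hmin y h fun hzy => hzw' (hzy.trans hyw.le)).not_gt h₂
  have : NeZero n := NeZero.of_pos (L z).pos
  refine ⟨L.trans (Fin.cycleIcc (L z) (L w)), strictMono_trans_cycleIcc hL hblock, ?_, ?_, ?_⟩
  · rw [Equiv.trans_apply, val_cycleIcc]
    split_ifs <;> omega
  · intro y hy
    rw [Equiv.trans_apply, val_cycleIcc, if_pos (Or.inl (Fin.lt_def.1 hy))]
  · intro y hzy
    have : (L y : ℕ) ≠ L w := fun h => hzw' (L.injective (Fin.ext h) ▸ hzy)
    rw [Equiv.trans_apply, val_cycleIcc]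
    split_ifs <;> omega

theorem exists_lower [Fintype X] {L : X ≃ Fin n} (hL : StrictMono L) {z x : X} (hx : L x < L z)
    (hxz : ¬ x ≤ z) :
    ∃ L' : X ≃ Fin n, StrictMono L' ∧ (L' z : ℕ) + 1 = L z ∧
      (∀ y, L z < L y → (L' y : ℕ) = L y) ∧
      ∀ y, y ≤ z → (L' y : ℕ) = L y ∨ (L' y : ℕ) + 1 = L y := by
  obtain ⟨L', hL', hz, hbelow, habove⟩ := exists_raise (strictMono_revDual_iff.2 hL)
    (z := toDual z) (x := toDual x) (by rwa [revDual_apply, revDual_apply, Fin.rev_lt_rev]) hxz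
  have hval (y : X) : (L' (toDual y) : ℕ) + revDual.symm L' y + 1 = n := by
    simpa using val_revDual_add (revDual.symm L') y
  have hvalL := val_revDual_add L
  refine ⟨revDual.symm L', strictMono_revDual_iff.1 (by simpa using hL'), ?_, fun y hy => ?_,
    fun y hy => ?_⟩
  · have := hval z; have := hvalL z
    omega
  · have := hbelow (toDual y) (by rwa [revDual_apply, revDual_apply, Fin.rev_lt_rev])
    have := hval y; have := hvalL y
    omega
  · have := habove (toDual y) hy
    have := hval y; have := hvalL y
    omega

end Moves

section GapCounts

variable {X : Type} [PartialOrder X] [Fintype X] {z₁ z₂ z₃ : X} {a b : ℕ}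

theorem F_pos_iff : 0 < F X z₁ z₂ z₃ a b ↔ ∃ L : X ≃ Fin (Fintype.card X), StrictMono L ∧
    (L z₂ : ℕ) = L z₁ + a ∧ (L z₃ : ℕ) = L z₂ + b := by
  rw [F, Nat.card_pos_iff]
  constructor
  · rintro ⟨⟨L, hL, h⟩, -⟩
    exact ⟨L, fun x y => hL x y, h⟩
  · rintro ⟨L, hL, h⟩
    exact ⟨⟨L, fun x y hxy => hL hxy, h⟩, inferInstance⟩

theorem F_orderDual :
    F Xᵒᵈ (toDual z₃) (toDual z₂) (toDual z₁) b a = F X z₁ z₂ z₃ a b := by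
  refine Nat.card_congr (revDual.subtypeEquiv fun L => ?_).symm
  have := val_revDual_add L z₁; have := val_revDual_add L z₂; have := val_revDual_add L z₃
  exact and_congr strictMono_revDual_iff.symm (by omega)

theorem card_add_card_lt_of_F_pos (h : 0 < F X z₁ z₂ z₃ a b) :
    #{x | x < z₁} + a + b + #{x | z₃ < x} < Fintype.card X := by
  obtain ⟨L, hL, h₂, h₃⟩ := F_pos_iff.1 h
  have := card_filter_lt_le_apply hL z₁
  have := apply_add_card_filter_gt_lt hL z₃
  omega

theorem F_succ_left_pos (h12 : z₁ < z₂) {L : X ≃ Fin (Fintype.card X)} (hL : StrictMono L)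
    (h₂ : (L z₂ : ℕ) = L z₁ + a) (h₃ : (L z₃ : ℕ) = L z₂ + b) (hlow : #{x | x < z₁} < L z₁) :
    0 < F X z₁ z₂ z₃ (a + 1) b := by
  obtain ⟨x, hx, hxz⟩ := exists_apply_lt_not_le L hlow
  obtain ⟨L', hL', h₁', habove, -⟩ := exists_lower hL hx hxz
  have h12' : L z₁ < L z₂ := hL h12
  have := habove z₂ h12'
  have := habove z₃ (by omega)
  exact F_pos_iff.2 ⟨L', hL', by omega, by omega⟩

theorem F_succ_right_pos (h23 : z₂ < z₃) {L : X ≃ Fin (Fintype.card X)} (hL : StrictMono L)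
    (h₂ : (L z₂ : ℕ) = L z₁ + a) (h₃ : (L z₃ : ℕ) = L z₂ + b)
    (hhigh : (L z₃ : ℕ) + #{x | z₃ < x} + 1 < Fintype.card X) :
    0 < F X z₁ z₂ z₃ a (b + 1) := by
  obtain ⟨x, hx, hxz⟩ := exists_apply_gt_not_ge L hhigh
  obtain ⟨L', hL', h₃', hbelow, -⟩ := exists_raise hL hx hxz
  have h23' : L z₂ < L z₃ := hL h23
  have := hbelow z₂ h23'
  have := hbelow z₁ (by omega)
  exact F_pos_iff.2 ⟨L', hL', by omega, by omega⟩

theorem comparable_of_F_succ_left_pos (h12 : z₁ < z₂) (h23 : z₂ < z₃) {k l : ℕ}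
    (h1 : F X z₁ z₂ z₃ k (l + 2) = 0) (h2 : F X z₁ z₂ z₃ (k + 2) l = 0)
    (h3 : 0 < F X z₁ z₂ z₃ (k + 1) (l + 1)) (hsucc : 0 < F X z₁ z₂ z₃ (k + 1) l) (u : X) :
    u ≤ z₂ ∨ z₂ ≤ u := by
  by_contra! hu
  obtain ⟨hu₁, hu₂⟩ := hu
  obtain ⟨V, hV, hV₂, hV₃⟩ := F_pos_iff.1 hsucc
  have hbound := card_add_card_lt_of_F_pos h3
  have hVlow : #{x | x < z₁} = V z₁ := (card_filter_lt_le_apply hV z₁).eq_of_not_lt fun hlow =>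
    (F_succ_left_pos h12 hV hV₂ hV₃ hlow).ne' h2
  have hVhigh : (V z₃ : ℕ) + #{x | z₃ < x} + 1 < Fintype.card X := by omega
  have hVu : V u ≠ V z₂ := fun h => hu₁ (V.injective h).le
  rcases hVu.lt_or_gt with hu_lt | hu_gt
  · obtain ⟨W, hW, hW₂, habove, hbelow⟩ := exists_lower hV hu_lt hu₁
    have := hbelow z₁ h12.le
    have := card_filter_lt_le_apply hW z₁
    have := habove z₃ (hV h23)
    exact (F_succ_right_pos (z₁ := z₁) h23 hW (a := k) (b := l + 1) (by omega) (by omega)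
      (by omega)).ne' h1
  · obtain ⟨W, hW, hW₂, hbelow, habove⟩ := exists_raise hV hu_gt hu₂
    have := hbelow z₁ (hV h12)
    rcases habove z₃ h23.le with hW₃ | hW₃
    · obtain ⟨m, rfl⟩ : ∃ m, l = m + 1 := ⟨l - 1, by have := hV h23; omega⟩
      exact (F_succ_right_pos (z₁ := z₁) h23 hW (a := k + 2) (b := m) (by omega) (by omega)
        (by omega)).ne' h2
    · exact (F_pos_iff.2 ⟨W, hW, by omega, by omega⟩).ne' h2

end GapCounts

end LinExt

open LinExt in
theorem all_comparable_to_middle_general (X : Type) [PartialOrder X] [Fintype X]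
    (z₁ z₂ z₃ : X) (h12 : z₁ < z₂) (h23 : z₂ < z₃)
    (k l : ℕ)
    (h1 : F X z₁ z₂ z₃ k (l + 2) = 0) (h2 : F X z₁ z₂ z₃ (k + 2) l = 0)
    (h3 : 0 < F X z₁ z₂ z₃ k l * F X z₁ z₂ z₃ (k + 1) (l + 1)) :
    ∀ u : X, u ≤ z₂ ∨ z₂ ≤ u := by
  obtain ⟨hpos, hpos_succ⟩ := CanonicallyOrderedAdd.mul_pos.1 h3
  obtain ⟨L, hL, hL₂, hL₃⟩ := F_pos_iff.1 hpos
  by_cases hlow : #{x | x < z₁} < L z₁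
  · exact comparable_of_F_succ_left_pos h12 h23 h1 h2 hpos_succ (F_succ_left_pos h12 hL hL₂ hL₃ hlow)
  · have := card_add_card_lt_of_F_pos hpos_succ
    have hhigh : (L z₃ : ℕ) + #{x | z₃ < x} + 1 < Fintype.card X := by omega
    intro u
    refine (comparable_of_F_succ_left_pos (z₁ := toDual z₃) (z₂ := toDual z₂) (z₃ := toDual z₁)
      (toDual_lt_toDual.2 h23) (toDual_lt_toDual.2 h12)
      (k := l) (l := k) ?_ ?_ ?_ ?_ (toDual u)).symm <;> rw [F_orderDual]
    exacts [h2, h1, hpos_succ, F_succ_right_pos h23 hL hL₂ hL₃ hhigh]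

theorem all_comparable_to_middle (X : Type) [PartialOrder X] [Fintype X]
    (z₁ z₂ z₃ : X) (h12 : z₁ < z₂) (h23 : z₂ < z₃)
    (k l : ℕ) (hk : 1 ≤ k) (hl : 1 ≤ l)
    (h1 : F X z₁ z₂ z₃ k (l + 2) = 0) (h2 : F X z₁ z₂ z₃ (k + 2) l = 0)
    (h3 : 0 < F X z₁ z₂ z₃ k l * F X z₁ z₂ z₃ (k + 1) (l + 1)) :
    ∀ u : X, u ≤ z₂ ∨ z₂ ≤ u :=
  all_comparable_to_middle_general X z₁ z₂ z₃ h12 h23 k l h1 h2 h3
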